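/- arXiv:2601.01325 — 3 statements merged into one kernel-verified Lean document; each statement's English description precedes it below -/
import Mathlib

section
/- For m = 4 and edge patterns a = (11,00,01,00), b = (10,10,00,10), the expected counts in the p1 model satisfy g_{n,4}(a) / g_{n,4}(b) = e^ρ, provided g_{n,4}(b) > 0; i.e., E[Q_n(a)] = e^ρ E[Q_n(b)] where Q_n(a) = Σ_{i,j,k,ℓ distinct} A^{11}_{ij} A^{00}_{jk} A^{01}_{kℓ} A^{00}_{ℓi} and Q_n(b) = Σ_{i,j,k,ℓ distinct} A^{10}_{ij} A^{10}_{jk} A^{00}_{kℓ} A^{10}_{ℓi}. -/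
open Real Finset

/-! Summand by summand, both patterns carry the same four factors `K` and the same monomial
`μ_i μ_j μ_l ν_i ν_j ν_k` in the node parameters; pattern `a` has the extra reciprocity factor
`e^ρ` from its mutual edge. -/

theorem quadrilateral_summand_eq {R ι : Type*} [CommRing R] (K : ι → ι → R) (μ ν : ι → R)
    (c : R) (i j k l : ι) :
    K i j * (c * (μ i * ν i) * (μ j * ν j)) * (K j k * 1) * (K k l * (μ l * ν k)) * (K l i * 1) =
      c * (K i j * (μ i * ν j) * (K j k * (μ j * ν k)) * (K k l * 1) * (K l i * (μ l * ν i))) := by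
  ring

theorem expected_quadrilateral_ratio_general (n : ℕ) (ρ : ℝ)
    (μ ν η : Fin n → ℝ)
    (hη : ∀ i, η i = μ i * ν i)
    (K : Fin n → Fin n → ℝ)
    -- expected counts of the two generalized quadrilaterals:
    (ga gb : ℝ)
    (hga : ga = ∑ i : Fin n, ∑ j : Fin n, ∑ k : Fin n, ∑ l : Fin n,
      if i ≠ j ∧ i ≠ k ∧ i ≠ l ∧ j ≠ k ∧ j ≠ l ∧ k ≠ l then
        (K i j * (exp ρ * η i * η j)) * (K j k * 1) * (K k l * (μ l * ν k)) * (K l i * 1)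
      else 0)
    (hgb : gb = ∑ i : Fin n, ∑ j : Fin n, ∑ k : Fin n, ∑ l : Fin n,
      if i ≠ j ∧ i ≠ k ∧ i ≠ l ∧ j ≠ k ∧ j ≠ l ∧ k ≠ l then
        (K i j * (μ i * ν j)) * (K j k * (μ j * ν k)) * (K k l * 1) * (K l i * (μ l * ν i))
      else 0)
    (hpos : 0 < gb) :
    ga / gb = exp ρ ∧ ga = exp ρ * gb := by
  have hga_eq : ga = exp ρ * gb := by
    simp only [hga, hgb, hη, Finset.mul_sum, mul_ite, mul_zero, quadrilateral_summand_eq]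
  exact ⟨(div_eq_iff hpos.ne').2 hga_eq, hga_eq⟩

theorem expected_quadrilateral_ratio (n : ℕ) (ρ γ : ℝ) (α β : Fin n → ℝ)
    (μ ν η : Fin n → ℝ)
    (hμ : ∀ i, μ i = exp (γ / 2 + α i)) (hν : ∀ i, ν i = exp (γ / 2 + β i))
    (hη : ∀ i, η i = μ i * ν i)
    (K : Fin n → Fin n → ℝ)
    (hK : ∀ i j, K i j = (1 + μ i * ν j + μ j * ν i + exp ρ * η i * η j)⁻¹)
    -- expected counts of the two generalized quadrilaterals:
    (ga gb : ℝ)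
    (hga : ga = ∑ i : Fin n, ∑ j : Fin n, ∑ k : Fin n, ∑ l : Fin n,
      if i ≠ j ∧ i ≠ k ∧ i ≠ l ∧ j ≠ k ∧ j ≠ l ∧ k ≠ l then
        (K i j * (exp ρ * η i * η j)) * (K j k * 1) * (K k l * (μ l * ν k)) * (K l i * 1)
      else 0)
    (hgb : gb = ∑ i : Fin n, ∑ j : Fin n, ∑ k : Fin n, ∑ l : Fin n,
      if i ≠ j ∧ i ≠ k ∧ i ≠ l ∧ j ≠ k ∧ j ≠ l ∧ k ≠ l then
        (K i j * (μ i * ν j)) * (K j k * (μ j * ν k)) * (K k l * 1) * (K l i * (μ l * ν i))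
      else 0)
    (hpos : 0 < gb) :
    ga / gb = exp ρ ∧ ga = exp ρ * gb :=
  expected_quadrilateral_ratio_general n ρ μ ν η hη K ga gb hga hgb hpos
end

section
/- No pair of edge patterns (a,b) ∈ S₃ × S₃ of odd length 3 satisfies the cancellation identity: there do not exist a, b ∈ {00,01,10,11}³ and nonzero constant c₀ such that for all positive vectors μ, ν, all ρ ∈ ℝ, and all distinct i₁,i₂,i₃, Ω̃^{a₁}_{i₁i₂}Ω̃^{a₂}_{i₂i₃}Ω̃^{a₃}_{i₃i₁} = e^{c₀ρ}·Ω̃^{b₁}_{i₁i₂}Ω̃^{b₂}_{i₂i₃}Ω̃^{b₃}_{i₃i₁}. -/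
open Real

/-- The "linearized" edge-type matrix entry for a two-bit code `(u,v)`. -/
noncomputable def OmTilde {n : ℕ} (μ ν : Fin n → ℝ) (ρ : ℝ) :
    Bool × Bool → Fin n → Fin n → ℝ
  | (false, false), _, _ => 1
  | (true, false), i, j => μ i * ν j
  | (false, true), i, j => μ j * ν i
  | (true, true), i, j => exp ρ * (μ i * ν i) * (μ j * ν j)

/-!
Put `μ = ν = exp ∘ m`. Then every factor `Ω̃^c_{ij}` becomes the exponential of
`[c = 11] ρ + |c| (m_i + m_j)`, where `|c|` is the number of ones in `c`, so the identity
turns into an identity of linear forms in `(m, ρ)`. On a triangle the three edge sums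
`m_i + m_j` are independent linear forms (this is where the odd length enters: the
edge–vertex incidence matrix of an odd cycle is invertible), hence `|a_k| = |b_k|` on every
edge. Since `|c| = 2` only for `c = 11`, the coefficients of `ρ` on both sides then agree,
which forces `c₀ = 0`.
-/

namespace OmTilde

def degree (c : Bool × Bool) : ℕ := c.1.toNat + c.2.toNat

def rhoDegree (c : Bool × Bool) : ℕ := (c.1 && c.2).toNat

lemma rhoDegree_eq_of_degree_eq {c c' : Bool × Bool} (h : degree c = degree c') :
    rhoDegree c = rhoDegree c' := by
  revert c c'
  decide

lemma exp_comp_self {n : ℕ} (m : Fin n → ℝ) (ρ : ℝ) (c : Bool × Bool) (i j : Fin n) :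
    OmTilde (exp ∘ m) (exp ∘ m) ρ c i j = exp (rhoDegree c * ρ + degree c * (m i + m j)) := by
  rw [exp_add, exp_nat_mul, exp_nat_mul, exp_add]
  obtain ⟨_ | _, _ | _⟩ := c <;>
    simp only [OmTilde, degree, rhoDegree, Function.comp_apply, Bool.and_self, Bool.and_true,
      Bool.and_false, Bool.toNat_false, Bool.toNat_true, Nat.reduceAdd, pow_zero, pow_one, zero_add,
      add_zero, one_mul, mul_one] <;> ring

noncomputable def triangleExponent (a : Fin 3 → Bool × Bool) (m : Fin 3 → ℝ) (ρ : ℝ) : ℝ :=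
  ∑ k, (rhoDegree (a k) * ρ + degree (a k) * (m k + m (k + 1)))

lemma triangle_exp_comp_self (a : Fin 3 → Bool × Bool) (m : Fin 3 → ℝ) (ρ : ℝ) :
    OmTilde (exp ∘ m) (exp ∘ m) ρ (a 0) 0 1 * OmTilde (exp ∘ m) (exp ∘ m) ρ (a 1) 1 2 *
        OmTilde (exp ∘ m) (exp ∘ m) ρ (a 2) 2 0 =
      exp (triangleExponent a m ρ) := by
  simp only [exp_comp_self, triangleExponent, Fin.sum_univ_three, Fin.isValue, Fin.reduceAdd,
    exp_add]

end OmTilde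

lemma Fin.eq_of_forall_sum_mul_add_succ_eq {d d' : Fin 3 → ℝ}
    (h : ∀ m : Fin 3 → ℝ, ∑ k, d k * (m k + m (k + 1)) = ∑ k, d' k * (m k + m (k + 1))) :
    d = d' := by
  -- each test vector makes exactly one of the edge sums `m k + m (k + 1)` nonzero
  have h0 := h ![1, 1, -1]
  have h1 := h ![-1, 1, 1]
  have h2 := h ![1, -1, 1]
  simp only [Fin.isValue, Fin.sum_univ_three, Matrix.cons_val_zero, Matrix.cons_val_one,
    Matrix.cons_val, Fin.reduceAdd, zero_add, add_zero, add_neg_cancel, neg_add_cancel, mul_zero,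
    mul_eq_mul_right_iff, add_self_eq_zero, one_ne_zero, or_false] at h0 h1 h2
  funext k
  fin_cases k <;> assumption

open OmTilde in
/-- No pair of length-3 edge patterns satisfies the cancellation identity. -/
theorem no_cancellation_pair_odd_length_three :
    ¬ ∃ (a b : Fin 3 → Bool × Bool) (c₀ : ℝ), c₀ ≠ 0 ∧
      ∀ (n : ℕ) (μ ν : Fin n → ℝ), (∀ i, 0 < μ i) → (∀ i, 0 < ν i) →
        ∀ (ρ : ℝ) (i₁ i₂ i₃ : Fin n), i₁ ≠ i₂ → i₁ ≠ i₃ → i₂ ≠ i₃ →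
          OmTilde μ ν ρ (a 0) i₁ i₂ * OmTilde μ ν ρ (a 1) i₂ i₃ *
              OmTilde μ ν ρ (a 2) i₃ i₁ =
            exp (c₀ * ρ) *
              (OmTilde μ ν ρ (b 0) i₁ i₂ * OmTilde μ ν ρ (b 1) i₂ i₃ *
                OmTilde μ ν ρ (b 2) i₃ i₁) := by
  rintro ⟨a, b, c₀, hc₀, h⟩
  have linear : ∀ m ρ, triangleExponent a m ρ = c₀ * ρ + triangleExponent b m ρ := by
    intro m ρ
    have := h 3 (exp ∘ m) (exp ∘ m) (fun _ => exp_pos _) (fun _ => exp_pos _) ρ 0 1 2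
      (by decide) (by decide) (by decide)
    rwa [triangle_exp_comp_self, triangle_exp_comp_self, ← exp_add, exp_eq_exp] at this
  have hdegree : (fun k => (degree (a k) : ℝ)) = fun k => (degree (b k) : ℝ) :=
    Fin.eq_of_forall_sum_mul_add_succ_eq fun m => by
      simpa [triangleExponent] using linear m 0
  have hrho : ∀ k, rhoDegree (a k) = rhoDegree (b k) := fun k =>
    rhoDegree_eq_of_degree_eq (by exact_mod_cast congrFun hdegree k)
  exact hc₀ (by simpa [triangleExponent, hrho] using linear 0 1)
end

section
/- For even m = 2N, the following family of pattern pairs satisfies the cancellation identity: let a = (1x₁, y₁0, 1x₂, y₂0, …, 1x_N, y_N0) and b = (0x₁, y₁1, 0x₂, y₂1, …, 0x_N, y_N1) for bits x₁,y₁,…,x_N,y_N ∈ {0,1}. Then for all distinct i₁,…,i_m and all positive μ, ν and ρ ∈ ℝ, Ω̃^{a₁}_{i₁i₂}⋯Ω̃^{a_m}_{i_m i₁} = e^{c₀ρ}·Ω̃^{b₁}_{i₁i₂}⋯Ω̃^{b_m}_{i_m i₁}, where c₀ = (x₁+⋯+x_N) − (y₁+⋯+y_N). -/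
open Real Finset

theorem cancellation_family_even_length (n N : ℕ) (hN : 0 < N)
    (ρ : ℝ) (μ ν : Fin n → ℝ) (hμ : ∀ i, 0 < μ i) (hν : ∀ i, 0 < ν i)
    (x y : Fin N → Bool)
    (a b : Fin (2 * N) → Bool × Bool)
    (ha : ∀ k : Fin (2 * N),
      a k = if k.val % 2 = 0 then (true, x ⟨k.val / 2, by omega⟩)
            else (y ⟨k.val / 2, by omega⟩, false))
    (hb : ∀ k : Fin (2 * N),
      b k = if k.val % 2 = 0 then (false, x ⟨k.val / 2, by omega⟩)
            else (y ⟨k.val / 2, by omega⟩, true))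
    (c₀ : ℝ)
    (hc₀ : c₀ = (∑ t : Fin N, if x t then (1 : ℝ) else 0)
              - (∑ t : Fin N, if y t then (1 : ℝ) else 0))
    (f : Fin (2 * N) → Fin n) (hf : Function.Injective f) :
    (∏ k : Fin (2 * N),
        OmTilde μ ν ρ (a k) (f k) (f ⟨(k.val + 1) % (2 * N), Nat.mod_lt _ (by omega)⟩)) =
      exp (c₀ * ρ) *
        ∏ k : Fin (2 * N),
          OmTilde μ ν ρ (b k) (f k) (f ⟨(k.val + 1) % (2 * N), Nat.mod_lt _ (by omega)⟩) := by
  have hMpos : 0 < 2 * N := by omega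
  have hdvd : 2 ∣ 2 * N := ⟨N, rfl⟩
  set g : Fin (2 * N) → Fin (2 * N) :=
    fun k => ⟨(k.val + 1) % (2 * N), Nat.mod_lt _ hMpos⟩ with hgdef
  set g' : Fin (2 * N) → Fin (2 * N) :=
    fun k => ⟨(k.val + (2 * N - 1)) % (2 * N), Nat.mod_lt _ hMpos⟩ with hg'def
  have hgg' : ∀ k, g (g' k) = k := by
    intro k
    have hk := k.isLt
    ext
    show ((k.val + (2 * N - 1)) % (2 * N) + 1) % (2 * N) = k.val
    rw [Nat.mod_add_mod]
    have h1 : k.val + (2 * N - 1) + 1 = k.val + 2 * N := by omega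
    rw [h1, Nat.add_mod_right, Nat.mod_eq_of_lt hk]
  have hg'g : ∀ k, g' (g k) = k := by
    intro k
    have hk := k.isLt
    ext
    show ((k.val + 1) % (2 * N) + (2 * N - 1)) % (2 * N) = k.val
    rw [Nat.mod_add_mod]
    have h1 : k.val + 1 + (2 * N - 1) = k.val + 2 * N := by omega
    rw [h1, Nat.add_mod_right, Nat.mod_eq_of_lt hk]
  have hgpar : ∀ k : Fin (2 * N), (g k).val % 2 = (k.val + 1) % 2 := by
    intro k
    show (k.val + 1) % (2 * N) % 2 = (k.val + 1) % 2
    exact Nat.mod_mod_of_dvd _ hdvd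
  have hg'par : ∀ k : Fin (2 * N), (g' k).val % 2 = (k.val + 1) % 2 := by
    intro k
    show (k.val + (2 * N - 1)) % (2 * N) % 2 = (k.val + 1) % 2
    rw [Nat.mod_mod_of_dvd _ hdvd]
    omega
  -- the exponential ratio factor
  set r : Fin (2 * N) → ℝ := fun k =>
    if hk : k.val % 2 = 0 then
      (if x ⟨k.val / 2, by omega⟩ then exp ρ else 1) * (μ (f k) * ν (f (g k)))
    else
      ((if y ⟨k.val / 2, by omega⟩ then exp ρ else 1) * (μ (f (g k)) * ν (f k)))⁻¹
    with hrdef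
  have key : ∀ k : Fin (2 * N),
      OmTilde μ ν ρ (a k) (f k) (f (g k)) = r k * OmTilde μ ν ρ (b k) (f k) (f (g k)) := by
    intro k
    have hμ0 : μ (f (g k)) ≠ 0 := (hμ _).ne'
    have hν0 : ν (f k) ≠ 0 := (hν _).ne'
    have hexp : exp ρ ≠ 0 := (exp_pos ρ).ne'
    rw [ha k, hb k, hrdef]
    by_cases hk : k.val % 2 = 0
    · simp only [hk, if_pos, dif_pos]
      cases hx : x ⟨k.val / 2, by omega⟩ <;> simp [OmTilde, hx] <;> ring
    · simp only [hk, if_neg, dif_neg, not_false_iff]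
      cases hy : y ⟨k.val / 2, by omega⟩ <;> simp [OmTilde, hy] <;>
        field_simp <;> ring
  -- reduce to computing ∏ r
  have hr : ∏ k : Fin (2 * N), r k = exp (c₀ * ρ) := by
    have hsplit := Finset.prod_filter_mul_prod_filter_not (univ : Finset (Fin (2 * N)))
      (fun k => k.val % 2 = 0) r
    set E := (univ : Finset (Fin (2 * N))).filter (fun k => k.val % 2 = 0) with hE
    set O := (univ : Finset (Fin (2 * N))).filter (fun k => ¬ k.val % 2 = 0) with hO
    have hmemE : ∀ k, k ∈ E ↔ k.val % 2 = 0 := by intro k; simp [hE]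
    have hmemO : ∀ k, k ∈ O ↔ ¬ k.val % 2 = 0 := by intro k; simp [hO]
    -- product over E
    have hEprod : ∏ k ∈ E, r k =
        (∏ k ∈ E, (if x ⟨k.val / 2, by omega⟩ then exp ρ else 1)) *
        ((∏ k ∈ E, μ (f k)) * (∏ k ∈ E, ν (f (g k)))) := by
      rw [← Finset.prod_mul_distrib, ← Finset.prod_mul_distrib]
      refine Finset.prod_congr rfl ?_
      intro k hk
      rw [hmemE] at hk
      rw [hrdef]
      simp [hk]
    have hOprod : ∏ k ∈ O, r k =
        ((∏ k ∈ O, (if y ⟨k.val / 2, by omega⟩ then exp ρ else 1)) *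
         ((∏ k ∈ O, μ (f (g k))) * (∏ k ∈ O, ν (f k))))⁻¹ := by
      rw [← Finset.prod_mul_distrib, ← Finset.prod_mul_distrib, ← Finset.prod_inv_distrib]
      refine Finset.prod_congr rfl ?_
      intro k hk
      rw [hmemO] at hk
      rw [hrdef]
      simp [hk]
    -- bijection g : E → O and O → E
    have hbij1 : ∏ k ∈ E, ν (f (g k)) = ∏ k ∈ O, ν (f k) := by
      refine Finset.prod_nbij' g g' ?_ ?_ ?_ ?_ ?_
      · intro k hk; rw [hmemE] at hk; rw [hmemO, hgpar]; omega
      · intro k hk; rw [hmemO] at hk; rw [hmemE, hg'par]; omega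
      · intro k _; exact hg'g k
      · intro k _; exact hgg' k
      · intro k _; rfl
    have hbij2 : ∏ k ∈ O, μ (f (g k)) = ∏ k ∈ E, μ (f k) := by
      refine Finset.prod_nbij' g g' ?_ ?_ ?_ ?_ ?_
      · intro k hk; rw [hmemO] at hk; rw [hmemE, hgpar]; omega
      · intro k hk; rw [hmemE] at hk; rw [hmemO, hg'par]; omega
      · intro k _; exact hg'g k
      · intro k _; exact hgg' k
      · intro k _; rfl
    -- identify E with Fin N
    have hEx : ∏ k ∈ E, (if x ⟨k.val / 2, by omega⟩ then exp ρ else (1:ℝ)) =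
        ∏ t : Fin N, (if x t then exp ρ else 1) := by
      refine Finset.prod_nbij' (fun k => (⟨k.val / 2, by omega⟩ : Fin N))
        (fun t => (⟨2 * t.val, by omega⟩ : Fin (2 * N))) ?_ ?_ ?_ ?_ ?_
      · intro k _; exact Finset.mem_univ _
      · intro t _; rw [hmemE]; show (2 * t.val) % 2 = 0; omega
      · intro k hk; rw [hmemE] at hk; ext; show 2 * (k.val / 2) = k.val; omega
      · intro t _; ext; show 2 * t.val / 2 = t.val; omega
      · intro k _; rfl
    have hOy : ∏ k ∈ O, (if y ⟨k.val / 2, by omega⟩ then exp ρ else (1:ℝ)) =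
        ∏ t : Fin N, (if y t then exp ρ else 1) := by
      refine Finset.prod_nbij' (fun k => (⟨k.val / 2, by omega⟩ : Fin N))
        (fun t => (⟨2 * t.val + 1, by omega⟩ : Fin (2 * N))) ?_ ?_ ?_ ?_ ?_
      · intro k _; exact Finset.mem_univ _
      · intro t _; rw [hmemO]; show ¬ (2 * t.val + 1) % 2 = 0; omega
      · intro k hk; rw [hmemO] at hk; ext; show 2 * (k.val / 2) + 1 = k.val; omega
      · intro t _; ext; show (2 * t.val + 1) / 2 = t.val; omega
      · intro k _; rfl
    have hxexp : ∏ t : Fin N, (if x t then exp ρ else (1:ℝ)) =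
        exp ((∑ t : Fin N, if x t then (1:ℝ) else 0) * ρ) := by
      rw [Finset.sum_mul, Real.exp_sum]
      refine Finset.prod_congr rfl ?_
      intro t _
      cases hx : x t <;> simp [hx]
    have hyexp : ∏ t : Fin N, (if y t then exp ρ else (1:ℝ)) =
        exp ((∑ t : Fin N, if y t then (1:ℝ) else 0) * ρ) := by
      rw [Finset.sum_mul, Real.exp_sum]
      refine Finset.prod_congr rfl ?_
      intro t _
      cases hy : y t <;> simp [hy]
    have hPpos : 0 < ∏ k ∈ E, μ (f k) := Finset.prod_pos (fun k _ => hμ _)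
    have hQpos : 0 < ∏ k ∈ O, ν (f k) := Finset.prod_pos (fun k _ => hν _)
    rw [← hsplit, hEprod, hOprod, hbij1, hbij2, hEx, hOy, hxexp, hyexp, hc₀]
    rw [sub_mul, Real.exp_sub]
    field_simp
  calc (∏ k : Fin (2 * N),
        OmTilde μ ν ρ (a k) (f k) (f ⟨(k.val + 1) % (2 * N), Nat.mod_lt _ (by omega)⟩))
      = ∏ k : Fin (2 * N), OmTilde μ ν ρ (a k) (f k) (f (g k)) := rfl
    _ = ∏ k : Fin (2 * N), (r k * OmTilde μ ν ρ (b k) (f k) (f (g k))) :=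
        Finset.prod_congr rfl (fun k _ => key k)
    _ = (∏ k : Fin (2 * N), r k) * ∏ k : Fin (2 * N), OmTilde μ ν ρ (b k) (f k) (f (g k)) :=
        Finset.prod_mul_distrib
    _ = exp (c₀ * ρ) * ∏ k : Fin (2 * N),
          OmTilde μ ν ρ (b k) (f k) (f ⟨(k.val + 1) % (2 * N), Nat.mod_lt _ (by omega)⟩) := by
        rw [hr]
end
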